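/- arXiv:2102.11071 — 2 statements merged into one kernel-verified Lean document; each statement's English description precedes it below -/
import Mathlib

section
/- The spectral radius of the next-generation matrix K = F V⁻¹ for the COVID-19 vaccination model, where F is the 4×4 matrix with nonzero entries F₁₃ = β_A S*/N*, F₁₄ = β_I S*/N*, F₂₃ = β_A(1-ψ)V*/N*, F₂₄ = β_I(1-ψ)V*/N*, and V is the 4×4 matrix with rows (k,0,0,0), (0,k,0,0), (-(1-p)k, -(1-p̃)k, γ_A, 0), (-pk, -p̃k, 0, γ+η+μ), equals, in the case p = p̃, R_e = (S*/N* + (1-ψ)V*/N*)·R₀ where R₀ = (1-p)β_A/γ_A + p β_I/(γ+η+μ). -/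
open Matrix Polynomial

/-!
Since `p = p̃`, both exposed compartments split into the asymptomatic and the symptomatic one in
the same proportions `1 - p : p`, so the first two columns of `K = F V⁻¹` coincide; its last two
rows vanish because those of `F` do. Such a matrix has characteristic polynomial `X³ (X - tr K)`,
and `tr K`, its only possibly nonzero eigenvalue, expands to the nonnegative number `R_e`.
-/

section NextGeneration

variable {K : Type*} [Field K]

-- Reducible, so that the lemmas below rewrite the explicit matrices of the theorem.
abbrev transitionMatrix (k γ d p : K) : Matrix (Fin 4) (Fin 4) K :=
  !![k, 0, 0, 0; 0, k, 0, 0; -(1 - p) * k, -(1 - p) * k, γ, 0; -(p * k), -(p * k), 0, d]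

abbrev infectionMatrix (f₁ f₂ g₁ g₂ : K) : Matrix (Fin 4) (Fin 4) K :=
  !![0, 0, f₁, f₂; 0, 0, g₁, g₂; 0, 0, 0, 0; 0, 0, 0, 0]

theorem det_transitionMatrix (k γ d p : K) : (transitionMatrix k γ d p).det = k ^ 2 * γ * d := by
  simp [det_succ_row_zero, Fin.sum_univ_succ, Fin.succAbove]
  ring

theorem infectionMatrix_mul_inv_transitionMatrix {f₁ f₂ g₁ g₂ k γ d p : K}
    (hk : k ≠ 0) (hγ : γ ≠ 0) (hd : d ≠ 0) :
    infectionMatrix f₁ f₂ g₁ g₂ * (transitionMatrix k γ d p)⁻¹ =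
      !![f₁ * (1 - p) / γ + f₂ * p / d, f₁ * (1 - p) / γ + f₂ * p / d, f₁ / γ, f₂ / d;
        g₁ * (1 - p) / γ + g₂ * p / d, g₁ * (1 - p) / γ + g₂ * p / d, g₁ / γ, g₂ / d;
        0, 0, 0, 0; 0, 0, 0, 0] := by
  have hdet : IsUnit (transitionMatrix k γ d p).det := by
    rw [det_transitionMatrix, isUnit_iff_ne_zero]
    exact mul_ne_zero (mul_ne_zero (pow_ne_zero 2 hk) hγ) hd
  -- `F V⁻¹ = K` follows from `F = K V`.
  refine (congrArg (· * _) ?_).trans (mul_nonsing_inv_cancel_right _ _ hdet)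
  ext i j
  fin_cases i <;> fin_cases j <;> simp [mul_apply, Fin.sum_univ_four] <;> field_simp <;> ring

end NextGeneration

theorem charpoly_of_equal_columns_of_zero_rows {R : Type*} [CommRing R] (a b c₁ c₂ d₁ d₂ : R) :
    (!![a, a, c₁, c₂; b, b, d₁, d₂; 0, 0, 0, 0; 0, 0, 0, 0] : Matrix (Fin 4) (Fin 4) R).charpoly =
      X ^ 3 * (X - C (a + b)) := by
  simp [charpoly, det_succ_row_zero, Fin.sum_univ_succ, Fin.succAbove, charmatrix_apply]
  ring

theorem isGreatest_norm_roots_X_pow_mul_X_sub_C {r : ℝ} (hr : 0 ≤ r) (n : ℕ) :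
    IsGreatest {s : ℝ | ∃ z : ℂ, (X ^ n * (X - C (r : ℂ))).IsRoot z ∧ s = ‖z‖} r := by
  have hroot : ∀ z : ℂ, (X ^ n * (X - C (r : ℂ))).IsRoot z → z = 0 ∨ z = r := by
    intro z hz
    simp only [IsRoot, eval_mul, eval_pow, eval_X, eval_sub, eval_C, mul_eq_zero,
      pow_eq_zero_iff', sub_eq_zero] at hz
    tauto
  refine ⟨⟨r, by simp, by simp [abs_of_nonneg hr]⟩, ?_⟩
  rintro s ⟨z, hz, rfl⟩
  rcases hroot z hz with rfl | rfl
  · simpa using hr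
  · simp [abs_of_nonneg hr]

theorem next_generation_spectral_radius_general
    (k γA γ η μ βA βI p ψ Sstar Vstar Nstar : ℝ)
    (hk : 0 < k) (hγA : 0 < γA) (hδ : 0 < γ + η + μ)
    (hβA : 0 ≤ βA) (hβI : 0 ≤ βI) (hp : 0 ≤ p) (hp1 : p ≤ 1)
    (hψ1 : ψ ≤ 1) (hS : 0 ≤ Sstar) (hV : 0 ≤ Vstar)
    (hN : 0 < Nstar)
    (F V : Matrix (Fin 4) (Fin 4) ℝ)
    (hF : F = !![0, 0, βA * Sstar / Nstar, βI * Sstar / Nstar;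
                 0, 0, βA * (1 - ψ) * Vstar / Nstar, βI * (1 - ψ) * Vstar / Nstar;
                 0, 0, 0, 0;
                 0, 0, 0, 0])
    (hV' : V = !![k, 0, 0, 0;
                  0, k, 0, 0;
                  -(1 - p) * k, -(1 - p) * k, γA, 0;
                  -(p * k), -(p * k), 0, γ + η + μ]) :
    IsGreatest
      {r : ℝ | ∃ z : ℂ, ((F * V⁻¹).map (algebraMap ℝ ℂ)).charpoly.IsRoot z ∧
        r = ‖z‖}
      ((Sstar / Nstar + (1 - ψ) * Vstar / Nstar) *
        ((1 - p) * βA / γA + p * βI / (γ + η + μ))) := by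
  set R_e := (Sstar / Nstar + (1 - ψ) * Vstar / Nstar) *
    ((1 - p) * βA / γA + p * βI / (γ + η + μ))
  have hcharpoly : (F * V⁻¹).charpoly = X ^ 3 * (X - C R_e) := by
    rw [hF, hV', infectionMatrix_mul_inv_transitionMatrix hk.ne' hγA.ne' hδ.ne',
      charpoly_of_equal_columns_of_zero_rows]
    congr 3
    ring
  have hR_e_nonneg : 0 ≤ R_e := by
    have h1p : 0 ≤ 1 - p := sub_nonneg.mpr hp1
    have h1ψ : 0 ≤ 1 - ψ := sub_nonneg.mpr hψ1
    positivity
  rw [charpoly_map, hcharpoly]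
  simpa using isGreatest_norm_roots_X_pow_mul_X_sub_C hR_e_nonneg 3

/-- The spectral radius of the next-generation matrix `K = F V⁻¹` equals
`R_e = (S*/N* + (1-ψ)V*/N*) · R₀` (case `p = p̃`), where the spectral radius
is the largest absolute value of the (complex) eigenvalues of `K`. -/
theorem next_generation_spectral_radius
    (k γA γ η μ βA βI p ψ Sstar Vstar Nstar : ℝ)
    (hk : 0 < k) (hγA : 0 < γA) (hδ : 0 < γ + η + μ)
    (hβA : 0 ≤ βA) (hβI : 0 ≤ βI) (hp : 0 ≤ p) (hp1 : p ≤ 1)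
    (hψ : 0 ≤ ψ) (hψ1 : ψ ≤ 1) (hS : 0 ≤ Sstar) (hV : 0 ≤ Vstar)
    (hN : 0 < Nstar)
    (F V : Matrix (Fin 4) (Fin 4) ℝ)
    (hF : F = !![0, 0, βA * Sstar / Nstar, βI * Sstar / Nstar;
                 0, 0, βA * (1 - ψ) * Vstar / Nstar, βI * (1 - ψ) * Vstar / Nstar;
                 0, 0, 0, 0;
                 0, 0, 0, 0])
    (hV' : V = !![k, 0, 0, 0;
                  0, k, 0, 0;
                  -(1 - p) * k, -(1 - p) * k, γA, 0;
                  -(p * k), -(p * k), 0, γ + η + μ]) :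
    IsGreatest
      {r : ℝ | ∃ z : ℂ, ((F * V⁻¹).map (algebraMap ℝ ℂ)).charpoly.IsRoot z ∧
        r = ‖z‖}
      ((Sstar / Nstar + (1 - ψ) * Vstar / Nstar) *
        ((1 - p) * βA / γA + p * βI / (γ + η + μ))) :=
  next_generation_spectral_radius_general k γA γ η μ βA βI p ψ Sstar Vstar Nstar hk hγA hδ hβA hβI
    hp hp1 hψ1 hS hV hN F V hF hV'
end

section
/- The Jacobian of the linearized infection subsystem F - V of the COVID-19 model (with p = p̃) has all eigenvalues with negative real part if and only if R_e = (s + v)·R₀ < 1, where s = S*/N*, v = (1-ψ)V*/N*, and R₀ = (1-p)β_A/γ_A + p β_I/δ with δ = γ+η+μ. -/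
/-!
The characteristic polynomial of `F - V` factors as `(X + k)` times the monic cubic
`(X + k)(X + γA)(X + δ) - k(s + v)((1 - p)βA(X + δ) + pβI(X + γA))`, whose constant term is
`kγAδ(1 - (s + v)R₀)`. When that constant term is positive, the other Routh–Hurwitz conditions
`b > 0` and `c < ab` follow from it, and they force every root of the cubic into the open left
half-plane. When it is nonpositive, the characteristic polynomial, monic of degree four, is
nonpositive at `0` and so has a nonnegative real root by the intermediate value theorem.
-/

open Matrix Polynomial

theorem Complex.re_neg_of_cubic_eq_zero {a b c : ℝ} (ha : 0 < a) (hb : 0 < b) (hc : 0 < c)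
    (habc : c < a * b) {z : ℂ} (hz : z ^ 3 + a * z ^ 2 + b * z + c = 0) : z.re < 0 := by
  by_contra! h
  have hre := congrArg re hz
  have him := congrArg im hz
  simp only [add_re, add_im, mul_re, mul_im, ofReal_re, ofReal_im, zero_re, zero_im,
    pow_succ, pow_zero, zero_mul, sub_zero, add_zero, one_mul] at hre him
  rcases eq_or_ne z.im 0 with hy | hy
  · rw [hy] at hre
    nlinarith [pow_nonneg h 3, pow_nonneg h 2]
  · have hy2 : z.im ^ 2 = 3 * z.re ^ 2 + 2 * a * z.re + b := by
      have : z.im * (3 * z.re ^ 2 + 2 * a * z.re + b - z.im ^ 2) = 0 := by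
        linear_combination him
      linarith [(mul_eq_zero.1 this).resolve_left hy]
    -- eliminating `z.im ^ 2` leaves a cubic in `z.re` with negative coefficients
    have key : -8 * z.re ^ 3 - 8 * a * z.re ^ 2 - 2 * (a ^ 2 + b) * z.re + (c - a * b) = 0 := by
      linear_combination hre + (3 * z.re + a) * hy2
    nlinarith [pow_nonneg h 3, pow_nonneg h 2, mul_nonneg (mul_nonneg ha.le h) h]

theorem Polynomial.exists_nonneg_isRoot_of_eval_zero_nonpos {P : ℝ[X]} (hdeg : 0 < P.degree)
    (hlc : 0 ≤ P.leadingCoeff) (h0 : P.eval 0 ≤ 0) : ∃ x, 0 ≤ x ∧ P.IsRoot x :=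
  intermediate_value_Ici P.continuous.continuousOn
    (tendsto_atTop_of_leadingCoeff_nonneg P hdeg hlc) h0

-- `k + γ + δ`, `kγ + kδ + γδ - m - n` and `kγδ - mδ - nγ` are the coefficients of the cubic
-- `(X + k)(X + γ)(X + δ) - m(X + δ) - n(X + γ)`.
theorem hurwitz_conditions_of_const_pos {k γ δ m n : ℝ} (hk : 0 < k) (hγ : 0 < γ) (hδ : 0 < δ)
    (hm : 0 ≤ m) (hn : 0 ≤ n) (hc : 0 < k * γ * δ - m * δ - n * γ) :
    0 < k * γ + k * δ + γ * δ - m - n ∧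
      k * γ * δ - m * δ - n * γ < (k + γ + δ) * (k * γ + k * δ + γ * δ - m - n) := by
  have hmγ : m < k * γ := lt_of_mul_lt_mul_right (by nlinarith) hδ.le
  have hnδ : n < k * δ := lt_of_mul_lt_mul_right (by nlinarith) hγ.le
  refine ⟨by nlinarith, ?_⟩
  nlinarith [mul_pos (sub_pos.2 hmγ) (add_pos hk hγ), mul_pos (sub_pos.2 hnδ) (add_pos hk hδ),
    mul_pos (mul_pos hγ hδ) (by linarith : 0 < γ + δ + 2 * k)]

def infectionJacobian {R : Type*} [CommRing R] (k γA δ βA βI p s v : R) :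
    Matrix (Fin 4) (Fin 4) R :=
  !![-k, 0, βA * s, βI * s;
     0, -k, βA * v, βI * v;
     (1 - p) * k, (1 - p) * k, -γA, 0;
     p * k, p * k, 0, -δ]

theorem charpoly_infectionJacobian {R : Type*} [CommRing R] (k γA δ βA βI p s v : R) :
    (infectionJacobian k γA δ βA βI p s v).charpoly =
      (X + C k) * ((X + C k) * (X + C γA) * (X + C δ) -
        C (k * (s + v)) * (C ((1 - p) * βA) * (X + C δ) + C (p * βI) * (X + C γA))) := by
  rw [Matrix.charpoly, Matrix.det_succ_row_zero]
  simp [Fin.sum_univ_succ, Matrix.det_succ_row_zero, infectionJacobian, charmatrix_apply,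
    Fin.succAbove]
  ring

theorem eval_zero_charpoly_infectionJacobian {R : Type*} [CommRing R] (k γA δ βA βI p s v : R) :
    (infectionJacobian k γA δ βA βI p s v).charpoly.eval 0 =
      k * (k * γA * δ - k * (s + v) * ((1 - p) * βA) * δ - k * (s + v) * (p * βI) * γA) := by
  rw [charpoly_infectionJacobian]
  simp only [eval_mul, eval_add, eval_sub, eval_X, eval_C]
  ring

theorem jacobian_stability_iff_Re_lt_one_general
    (k γA δ βA βI p s v R0 : ℝ)
    (hk : 0 < k) (hγA : 0 < γA) (hδ : 0 < δ)
    (hβA : 0 ≤ βA) (hβI : 0 ≤ βI) (hp : 0 ≤ p) (hp1 : p ≤ 1)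
    (hsv : 0 < s + v)
    (hR0 : R0 = (1 - p) * βA / γA + p * βI / δ)
    (F V : Matrix (Fin 4) (Fin 4) ℝ)
    (hF : F = !![0, 0, βA * s, βI * s;
                 0, 0, βA * v, βI * v;
                 0, 0, 0, 0;
                 0, 0, 0, 0])
    (hV : V = !![k, 0, 0, 0;
                 0, k, 0, 0;
                 -(1 - p) * k, -(1 - p) * k, γA, 0;
                 -(p * k), -(p * k), 0, δ]) :
    (∀ z : ℂ, ((F - V).map (algebraMap ℝ ℂ)).charpoly.IsRoot z → z.re < 0) ↔
      (s + v) * R0 < 1 := by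
  have hJ : F - V = infectionJacobian k γA δ βA βI p s v := by
    subst hF hV
    ext i j
    fin_cases i <;> fin_cases j <;> simp [infectionJacobian] <;> ring
  set m := k * (s + v) * ((1 - p) * βA)
  set n := k * (s + v) * (p * βI)
  have hc : k * γA * δ - m * δ - n * γA = k * γA * δ * (1 - (s + v) * R0) := by
    rw [hR0]; field_simp; ring
  have hkγδ : 0 < k * γA * δ := by positivity
  rw [hJ, charpoly_map]
  constructor
  · intro hstable
    by_contra! hR
    have h0 : (infectionJacobian k γA δ βA βI p s v).charpoly.eval 0 ≤ 0 := by
      rw [eval_zero_charpoly_infectionJacobian, hc]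
      exact mul_nonpos_of_nonneg_of_nonpos hk.le
        (mul_nonpos_of_nonneg_of_nonpos hkγδ.le (by linarith))
    obtain ⟨x, hx0, hx⟩ := exists_nonneg_isRoot_of_eval_zero_nonpos
      (by rw [charpoly_degree_eq_dim]; norm_num) (by simp [(charpoly_monic _).leadingCoeff]) h0
    simpa using (hstable _ hx.map).trans_le hx0
  · intro hR z hz
    have hm : 0 ≤ m := mul_nonneg (mul_nonneg hk.le hsv.le) (mul_nonneg (sub_nonneg.2 hp1) hβA)
    have hn : 0 ≤ n := mul_nonneg (mul_nonneg hk.le hsv.le) (mul_nonneg hp hβI)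
    have hc_pos : 0 < k * γA * δ - m * δ - n * γA := by
      rw [hc]; exact mul_pos hkγδ (by linarith)
    obtain ⟨hb, habc⟩ := hurwitz_conditions_of_const_pos hk hγA hδ hm hn hc_pos
    rw [IsRoot.def, eval_map_algebraMap, charpoly_infectionJacobian] at hz
    simp only [map_mul, map_add, map_sub, map_one, aeval_X, aeval_C, Complex.coe_algebraMap] at hz
    rcases mul_eq_zero.1 hz with hz | hz
    · simpa [eq_neg_of_add_eq_zero_left hz] using hk
    · refine Complex.re_neg_of_cubic_eq_zero (by positivity) hb hc_pos habc ?_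
      push_cast [m, n]
      linear_combination hz

/-- All eigenvalues of `F - V` have negative real part iff `(s+v)·R₀ < 1`. -/
theorem jacobian_stability_iff_Re_lt_one
    (k γA δ βA βI p s v R0 : ℝ)
    (hk : 0 < k) (hγA : 0 < γA) (hδ : 0 < δ)
    (hβA : 0 ≤ βA) (hβI : 0 ≤ βI) (hp : 0 ≤ p) (hp1 : p ≤ 1)
    (hs : 0 ≤ s) (hv : 0 ≤ v) (hsv : 0 < s + v)
    (hR0 : R0 = (1 - p) * βA / γA + p * βI / δ) (hR0pos : 0 < R0)
    (F V : Matrix (Fin 4) (Fin 4) ℝ)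
    (hF : F = !![0, 0, βA * s, βI * s;
                 0, 0, βA * v, βI * v;
                 0, 0, 0, 0;
                 0, 0, 0, 0])
    (hV : V = !![k, 0, 0, 0;
                 0, k, 0, 0;
                 -(1 - p) * k, -(1 - p) * k, γA, 0;
                 -(p * k), -(p * k), 0, δ]) :
    (∀ z : ℂ, ((F - V).map (algebraMap ℝ ℂ)).charpoly.IsRoot z → z.re < 0) ↔
      (s + v) * R0 < 1 :=
  jacobian_stability_iff_Re_lt_one_general k γA δ βA βI p s v R0 hk hγA hδ hβA hβI hp hp1 hsv hR0 F
    V hF hV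
end
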